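/- Let n ≥ 5. There do not exist formal power series g, f over ℤ/3ℤ with constant term of f equal to 0 and an index t ∈ {0,1,…,n−1} such that the n×n matrix S = L − Lᵀ, where L is the matrix with (i,j)-entry equal to the coefficient of z^i in z·g·f^j (0 ≤ i,j ≤ n−1), satisfies: S(j,t) = 0 for all j, and S(j,k) ≠ 0 for all j ≠ k with j ≠ t and k ≠ t. In other words, no orientation of the graph K_{n−1} ∪ K_1 (a complete graph on n−1 vertices together with one isolated vertex) is an oriented Riordan graph. -/

import Mathlib

open PowerSeries Matrix

/-!
Write `f = z h`. Then `(zg, f)_n` is strictly lower triangular with subdiagonal entries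
`g(0) h(0)^j`, so `S (j+1) j = g(0) h(0)^j`. The vanishing column at `t` forces one of these
subdiagonal entries to be `0`, hence `g(0) h(0) = 0`, hence all of them vanish from `j = 1` on.
Among `j = 1, 2, 3` some pair `j, j+1` avoids `t`, and the arc between them is missing.
-/

/-- The `n × n` matrix `(zg, f)_n` whose `(i,j)`-entry (0-indexed) is the coefficient
of `z^i` in `z·g·f^j`. -/
noncomputable def riordanMat (n : ℕ) (g f : PowerSeries (ZMod 3)) :
    Matrix (Fin n) (Fin n) (ZMod 3) :=
  Matrix.of fun i j => coeff (R := ZMod 3) (i : ℕ) (X * g * f ^ (j : ℕ))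

lemma mul_pow_eq_zero_of_mul_pow_eq_zero {M₀ : Type*} [MonoidWithZero M₀] [NoZeroDivisors M₀]
    {a b : M₀} {k j : ℕ} (hk : a * b ^ k = 0) (hj : j ≠ 0) : a * b ^ j = 0 := by
  rcases mul_eq_zero.mp hk with ha | hb
  · rw [ha, zero_mul]
  · rw [eq_zero_of_pow_eq_zero hb, zero_pow hj, mul_zero]

lemma coeff_X_mul_mul_X_mul_pow {R : Type*} [CommSemiring R] (g h : PowerSeries R) (i j : ℕ) :
    coeff i (X * g * (X * h) ^ j) = if j + 1 ≤ i then coeff (i - (j + 1)) (g * h ^ j) else 0 := by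
  rw [show X * g * (X * h) ^ j = g * h ^ j * X ^ (j + 1) by ring, coeff_mul_X_pow']

lemma riordanMat_X_mul_apply_of_le {n : ℕ} (g h : PowerSeries (ZMod 3)) {i j : Fin n}
    (hij : (i : ℕ) ≤ j) : riordanMat n g (X * h) i j = 0 := by
  rw [riordanMat, of_apply, coeff_X_mul_mul_X_mul_pow, if_neg (by omega)]

lemma riordanMat_X_mul_apply_of_eq_succ {n : ℕ} (g h : PowerSeries (ZMod 3)) {i j : Fin n}
    (hij : (i : ℕ) = j + 1) :
    riordanMat n g (X * h) i j = constantCoeff g * constantCoeff h ^ (j : ℕ) := by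
  rw [riordanMat, of_apply, coeff_X_mul_mul_X_mul_pow, if_pos hij.ge, hij, Nat.sub_self,
    coeff_zero_eq_constantCoeff, map_mul, map_pow]

lemma riordanMat_X_mul_sub_transpose_apply_of_eq_succ {n : ℕ} (g h : PowerSeries (ZMod 3))
    {i j : Fin n} (hij : (i : ℕ) = j + 1) :
    (riordanMat n g (X * h) - (riordanMat n g (X * h))ᵀ) i j =
      constantCoeff g * constantCoeff h ^ (j : ℕ) := by
  rw [Matrix.sub_apply, transpose_apply, riordanMat_X_mul_apply_of_eq_succ g h hij,
    riordanMat_X_mul_apply_of_le g h (by omega), sub_zero]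

lemma riordanMat_X_mul_sub_transpose_apply_of_succ_eq {n : ℕ} (g h : PowerSeries (ZMod 3))
    {i j : Fin n} (hij : (j : ℕ) = i + 1) :
    (riordanMat n g (X * h) - (riordanMat n g (X * h))ᵀ) i j =
      -(constantCoeff g * constantCoeff h ^ (i : ℕ)) := by
  rw [Matrix.sub_apply, transpose_apply, riordanMat_X_mul_apply_of_eq_succ g h hij,
    riordanMat_X_mul_apply_of_le g h (by omega), zero_sub]

/-- For `n ≥ 5`, no orientation of `K_{n−1} ∪ K_1` is an oriented Riordan graph:
there are no power series `g`, `f` over `ℤ/3ℤ` with `f(0) = 0` and a vertex `t`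
such that in `S = (zg,f)_n − (zg,f)_nᵀ` the row/column of `t` vanishes while all
other off-diagonal entries are nonzero. -/
theorem no_orientation_of_KnSubOne_union_K1_is_riordan (n : ℕ) (hn : 5 ≤ n) :
    ¬ ∃ (g f : PowerSeries (ZMod 3)) (t : Fin n),
        constantCoeff (R := ZMod 3) f = 0 ∧
        (∀ j : Fin n, (riordanMat n g f - (riordanMat n g f)ᵀ) j t = 0) ∧
        (∀ j k : Fin n, j ≠ k → j ≠ t → k ≠ t →
          (riordanMat n g f - (riordanMat n g f)ᵀ) j k ≠ 0) := by
  rintro ⟨g, f, t, hf0, hcol, hedge⟩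
  obtain ⟨h, rfl⟩ : ∃ h, f = X * h := X_dvd_iff.mpr hf0
  have hzero : ∃ k, constantCoeff g * constantCoeff h ^ k = 0 := by
    by_cases ht : (t : ℕ) = 0
    · have := hcol ⟨1, by omega⟩
      rw [riordanMat_X_mul_sub_transpose_apply_of_eq_succ g h (by dsimp only; omega)] at this
      exact ⟨_, this⟩
    · have := hcol ⟨t - 1, by omega⟩
      rw [riordanMat_X_mul_sub_transpose_apply_of_succ_eq g h (by dsimp only; omega),
        neg_eq_zero] at this
      exact ⟨_, this⟩
  obtain ⟨k, hk⟩ := hzero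
  obtain ⟨j, hj0, hj3, hjt, hj1t⟩ : ∃ j : ℕ, j ≠ 0 ∧ j ≤ 3 ∧ j ≠ t ∧ j + 1 ≠ t := by
    by_cases ht : (t : ℕ) = 1 ∨ (t : ℕ) = 2
    · exact ⟨3, by omega⟩
    · exact ⟨1, by omega⟩
  apply hedge ⟨j + 1, by omega⟩ ⟨j, by omega⟩ (by simp) (Fin.ne_of_val_ne hj1t)
    (Fin.ne_of_val_ne hjt)
  rw [riordanMat_X_mul_sub_transpose_apply_of_eq_succ g h rfl]
  exact mul_pow_eq_zero_of_mul_pow_eq_zero hk hj0
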